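/- arXiv:1803.02165 — 2 statements merged into one kernel-verified Lean document; each statement's English description precedes it below -/
import Mathlib

section
/- Let K be a field, F(X,Y) ∈ K[X,Y] a polynomial of total degree d and K₀, L₀ ∈ K. Then δ(F(X − K₀, Y − L₀)) = δ(F(X,Y)); that is, the quantity δ(F) is invariant under translation of the variables. -/
/-!
Substituting `X i - a i` for `X i` sends a monomial `X^n` to `∏ (X i - a i)^(n i)`, all of whose
monomials divide `X^n`. Hence the translate of `F` has its support inside the lower closure of
the support of `F`; translating back by `-a` gives the reverse inclusion. So the lower closure of
the support, which is the set counted by `δ`, is translation invariant.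
-/

open MvPolynomial

/-- `δ(F)`: the number of pairs `(k, ℓ)` such that `X^k Y^ℓ` divides some monomial
appearing in `F`. -/
noncomputable def deltaF {K : Type*} [Field K] (F : MvPolynomial (Fin 2) K) : ℕ :=
  Set.ncard {kl : ℕ × ℕ | ∃ m ∈ F.support, kl.1 ≤ m 0 ∧ kl.2 ≤ m 1}

namespace MvPolynomial

variable {σ R : Type*} [CommRing R]

theorem degreeOf_X_le (i j : σ) : degreeOf i (X j : MvPolynomial σ R) ≤ Finsupp.single j 1 i :=
  degreeOf_le_iff.2 fun _ hm => by rw [Finset.mem_singleton.1 (support_monomial_subset hm)]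

theorem degreeOf_X_sub_C_pow_le (i j : σ) (a : R) (k : ℕ) :
    degreeOf i ((X j - C a) ^ k) ≤ Finsupp.single j k i :=
  calc degreeOf i ((X j - C a) ^ k) ≤ k * degreeOf i (X j - C a) := degreeOf_pow_le _ _ _
    _ ≤ k * Finsupp.single j 1 i := by
        gcongr
        refine (degreeOf_sub_le _ _ _).trans (max_le (degreeOf_X_le i j) ?_)
        exact (degreeOf_C a i).trans_le (Nat.zero_le _)
    _ = Finsupp.single j k i := by
        rw [← smul_eq_mul, ← Finsupp.smul_apply, Finsupp.smul_single_one]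

theorem degreeOf_aeval_X_sub_C_monomial_le (a : σ → R) (n : σ →₀ ℕ) (c : R) (i : σ) :
    degreeOf i (aeval (fun j => X j - C (a j)) (monomial n c)) ≤ n i := by
  rw [aeval_monomial, algebraMap_eq]
  calc degreeOf i (C c * n.prod fun j k => (X j - C (a j)) ^ k)
      ≤ ∑ j ∈ n.support, degreeOf i ((X j - C (a j)) ^ n j) :=
        (degreeOf_C_mul_le _ _ _).trans (degreeOf_prod_le _ _ _)
    _ ≤ ∑ j ∈ n.support, Finsupp.single j (n j) i :=
        Finset.sum_le_sum fun j _ => degreeOf_X_sub_C_pow_le i j (a j) (n j)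
    _ = n i := by rw [← Finsupp.finsetSum_apply, ← Finsupp.sum, Finsupp.sum_single]

theorem exists_mem_support_le_of_mem_support_aeval_X_sub_C (a : σ → R) {F : MvPolynomial σ R}
    {m : σ →₀ ℕ} (hm : m ∈ (aeval (fun j => X j - C (a j)) F).support) :
    ∃ n ∈ F.support, m ≤ n := by
  classical
  rw [F.as_sum, map_sum] at hm
  obtain ⟨n, hn, hmn⟩ := Finset.mem_biUnion.1 (support_sum hm)
  exact ⟨n, hn, fun i =>
    (monomial_le_degreeOf i hmn).trans (degreeOf_aeval_X_sub_C_monomial_le a n _ i)⟩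

theorem aeval_X_sub_C_neg_aeval_X_sub_C (a : σ → R) (F : MvPolynomial σ R) :
    aeval (fun j => X j - C (-a j)) (aeval (fun j => X j - C (a j)) F) = F := by
  rw [← AlgHom.comp_apply, ← AlgHom.id_apply (R := R) F]
  congr 1
  ext j
  simp

theorem lowerClosure_support_aeval_X_sub_C (a : σ → R) (F : MvPolynomial σ R) :
    lowerClosure ((aeval (fun j => X j - C (a j)) F).support : Set (σ →₀ ℕ)) =
      lowerClosure (F.support : Set (σ →₀ ℕ)) := by
  have dominated : ∀ (b : σ → R) (G : MvPolynomial σ R),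
      lowerClosure ((aeval (fun j => X j - C (b j)) G).support : Set (σ →₀ ℕ)) ≤
        lowerClosure (G.support : Set (σ →₀ ℕ)) :=
    fun b _ => lowerClosure_le.2 fun _ hm =>
      mem_lowerClosure.2 (exists_mem_support_le_of_mem_support_aeval_X_sub_C b hm)
  refine le_antisymm (dominated a F) ?_
  conv_lhs => rw [← aeval_X_sub_C_neg_aeval_X_sub_C a F]
  exact dominated (-a) _

end MvPolynomial

theorem deltaF_eq_of_lowerClosure_support_eq {K : Type*} [Field K] {F G : MvPolynomial (Fin 2) K}
    (h : lowerClosure (F.support : Set (Fin 2 →₀ ℕ)) = lowerClosure (G.support : Set _)) :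
    deltaF F = deltaF G := by
  have mem_iff : ∀ (H : MvPolynomial (Fin 2) K) (k l : ℕ),
      (∃ m ∈ H.support, k ≤ m 0 ∧ l ≤ m 1) ↔
        Finsupp.single 0 k + Finsupp.single 1 l ∈ lowerClosure (H.support : Set (Fin 2 →₀ ℕ)) := by
    intro H k l
    simp [mem_lowerClosure, Finsupp.le_def, Fin.forall_fin_two]
  unfold deltaF
  congr 1
  ext ⟨k, l⟩
  simp only [Set.mem_ofPred_eq, mem_iff, h]

theorem deltaF_translation_invariant_general {K : Type*} [Field K]
    (F : MvPolynomial (Fin 2) K) (K₀ L₀ : K) :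
    deltaF (MvPolynomial.aeval
        ![(X 0 : MvPolynomial (Fin 2) K) - MvPolynomial.C K₀,
          (X 1 : MvPolynomial (Fin 2) K) - MvPolynomial.C L₀] F)
      = deltaF F := by
  have translation_eq :
      ![(X 0 : MvPolynomial (Fin 2) K) - C K₀, X 1 - C L₀] = fun j => X j - C (![K₀, L₀] j) := by
    ext1 j; fin_cases j <;> rfl
  rw [translation_eq]
  exact deltaF_eq_of_lowerClosure_support_eq (lowerClosure_support_aeval_X_sub_C _ F)

/-- **Lemma (translation invariance of `δ`).**  For a field `K`, a polynomial
`F ∈ K[X,Y]` of total degree `d` and `K₀, L₀ ∈ K`, one has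
`δ(F(X - K₀, Y - L₀)) = δ(F(X, Y))`. -/
theorem deltaF_translation_invariant {K : Type*} [Field K]
    (F : MvPolynomial (Fin 2) K) (d : ℕ) (hdeg : F.totalDegree = d) (K₀ L₀ : K) :
    deltaF (MvPolynomial.aeval
        ![(X 0 : MvPolynomial (Fin 2) K) - MvPolynomial.C K₀,
          (X 1 : MvPolynomial (Fin 2) K) - MvPolynomial.C L₀] F)
      = deltaF F :=
  deltaF_translation_invariant_general F K₀ L₀
end

section
/- Let K be an algebraically closed field, F(X,Y) ∈ K[X,Y] an irreducible polynomial of total degree d, and G(X,Y) ∈ K[X,Y] a nonzero polynomial of total degree at most d. If the number of common zeros of F and G in K², i.e. #{(x,y) ∈ K² : F(x,y) = G(x,y) = 0}, exceeds d², then F divides G in K[X,Y]. -/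
/-!
Over any field, a prime `F` and a polynomial `G` it does not divide have at most `d * e` common
zeros, where `d = deg F` and `e = deg G`. Let `S` be a set of `n` common zeros and `V m` the
polynomials of total degree `≤ m`, of dimension `(m + 1) (m + 2) / 2`. The map
`(a, b) ↦ a F + b G` on `V (e + n) × V (d + n)` lands in the polynomials of degree `≤ d + e + n`
vanishing on `S`, a subspace of codimension `n` because polynomials of degree `< n` already
interpolate arbitrary values on `S`. Since `F` is prime and does not divide `G`, its kernel
consists of the pairs `(-c G, c F)` with `c ∈ V n`. Comparing dimensions gives `n ≤ d e`.
-/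

open MvPolynomial Module Finset

section LinearAlgebra

variable {K M N : Type*} [DivisionRing K] [AddCommGroup M] [Module K M] [AddCommGroup N]
  [Module K N]

instance Submodule.finiteDimensional_prod (p : Submodule K M) (q : Submodule K N)
    [FiniteDimensional K p] [FiniteDimensional K q] : FiniteDimensional K (p.prod q) := by
  rw [← p.range_subtype, ← q.range_subtype, ← LinearMap.range_prodMap]
  infer_instance

theorem Submodule.finrank_prod_eq (p : Submodule K M) (q : Submodule K N)
    [FiniteDimensional K p] [FiniteDimensional K q] :
    finrank K (p.prod q) = finrank K p + finrank K q := by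
  have h := LinearMap.finrank_range_of_inj (f := p.subtype.prodMap q.subtype)
    (Prod.map_injective.2 ⟨p.injective_subtype, q.injective_subtype⟩)
  rwa [LinearMap.range_prodMap, p.range_subtype, q.range_subtype, Module.finrank_prod] at h

theorem Submodule.finrank_map_add_finrank_inf_ker (f : M →ₗ[K] N) (p : Submodule K M)
    [FiniteDimensional K p] :
    finrank K (p.map f) + finrank K ↥(p ⊓ LinearMap.ker f) = finrank K p := by
  rw [← LinearMap.range_domRestrict, ← (f.domRestrict p).finrank_range_add_finrank_ker,
    LinearMap.ker_domRestrict,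
    ← Submodule.finrank_map_subtype_eq, Submodule.map_comap_subtype]

end LinearAlgebra

namespace MvPolynomial

section Dimension

variable {K σ : Type*} [Field K]

theorem finrank_restrictTotalDegree [Fintype σ] (m : ℕ) :
    finrank K (restrictTotalDegree σ K m) = (m + Fintype.card σ).choose (Fintype.card σ) := by
  classical
  have hset : {s : σ →₀ ℕ | (s.sum fun _ e => e) ≤ m} =
      ↑((range (m + 1)).biUnion fun k => (univ : Finset σ).finsuppAntidiag k) := by
    ext s
    simp [Finsupp.sum_fintype]
  have hdisj : (range (m + 1) : Set ℕ).PairwiseDisjoint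
      fun k => (univ : Finset σ).finsuppAntidiag k := by
    intro i _ j _ hij
    simp only [Function.onFun, disjoint_left, mem_finsuppAntidiag]
    rintro s ⟨rfl, -⟩ ⟨h, -⟩
    exact hij h
  rw [finrank_eq_nat_card_basis (show Basis _ K (restrictTotalDegree σ K m) from
      basisRestrictSupport K {s : σ →₀ ℕ | (s.sum fun _ e => e) ≤ m}),
    hset, Nat.card_coe_set_eq, Set.ncard_coe_finset, card_biUnion hdisj]
  simp_rw [card_finsuppAntidiag_nat_eq_multichoose, card_univ]
  exact Nat.sum_range_multichoose m _

theorem two_mul_finrank_restrictTotalDegree_fin_two (m : ℕ) :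
    2 * finrank K (restrictTotalDegree (Fin 2) K m) = (m + 1) * (m + 2) := by
  have h := Nat.add_one_mul_choose_eq (m + 1) 1
  rw [Nat.choose_one_right] at h
  rw [finrank_restrictTotalDegree, Fintype.card_fin]
  linarith

end Dimension

section Interpolation

variable {K σ : Type*} [Field K]

noncomputable def evalOn (S : Finset (σ → K)) : MvPolynomial σ K →ₗ[K] S → K :=
  LinearMap.pi fun q => (aeval (q : σ → K)).toLinearMap

@[simp]
theorem evalOn_apply (S : Finset (σ → K)) (f : MvPolynomial σ K) (q : S) :
    evalOn S f q = eval (q : σ → K) f :=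
  rfl

theorem exists_totalDegree_le_one_eval_eq_zero_ne_zero {p q : σ → K} (h : q ≠ p) :
    ∃ ℓ : MvPolynomial σ K, ℓ.totalDegree ≤ 1 ∧ eval q ℓ = 0 ∧ eval p ℓ ≠ 0 := by
  obtain ⟨i, hi⟩ := Function.ne_iff.mp h
  refine ⟨X i - C (q i), ?_, by simp, by simpa [sub_eq_zero] using hi.symm⟩
  exact (totalDegree_sub_C_le _ _).trans (totalDegree_X i).le

theorem exists_totalDegree_le_eval_eq_ite [DecidableEq (σ → K)] (S : Finset (σ → K))
    {p : σ → K} (hp : p ∈ S) :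
    ∃ u : MvPolynomial σ K, u.totalDegree ≤ #S - 1 ∧
      ∀ q ∈ S, eval q u = if q = p then 1 else 0 := by
  choose! ℓ hℓ_deg hℓ_q hℓ_p using fun q (hq : q ∈ S.erase p) =>
    exists_totalDegree_le_one_eval_eq_zero_ne_zero (ne_of_mem_erase hq)
  set u₀ := ∏ q ∈ S.erase p, ℓ q
  have hu₀_deg : u₀.totalDegree ≤ #S - 1 := calc
    u₀.totalDegree ≤ ∑ q ∈ S.erase p, (ℓ q).totalDegree := totalDegree_finsetProd _ _
    _ ≤ ∑ q ∈ S.erase p, 1 := sum_le_sum hℓ_deg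
    _ = #S - 1 := by rw [sum_const, smul_eq_mul, mul_one, card_erase_of_mem hp]
  have hu₀_p : eval p u₀ ≠ 0 := by
    rw [map_prod]
    exact prod_ne_zero_iff.2 hℓ_p
  refine ⟨C (eval p u₀)⁻¹ * u₀, ?_, fun q hq => ?_⟩
  · refine (totalDegree_mul _ _).trans ?_
    rwa [totalDegree_C, zero_add]
  · split_ifs with hqp
    · rw [hqp, map_mul, eval_C, inv_mul_cancel₀ hu₀_p]
    · have hq' : q ∈ S.erase p := mem_erase.2 ⟨hqp, hq⟩
      rw [map_mul, eval_C]
      refine mul_eq_zero_of_right _ ?_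
      rw [map_prod]
      exact prod_eq_zero hq' (hℓ_q q hq')

theorem map_evalOn_restrictTotalDegree {S : Finset (σ → K)} {m : ℕ} (hS : #S ≤ m + 1) :
    (restrictTotalDegree σ K m).map (evalOn S) = ⊤ := by
  classical
  rw [eq_top_iff, ← (Pi.basisFun K S).span_eq, Submodule.span_le]
  rintro _ ⟨q₀, rfl⟩
  obtain ⟨u, hu_deg, hu⟩ := exists_totalDegree_le_eval_eq_ite S q₀.2
  refine ⟨u, (mem_restrictTotalDegree _ _ _).2 (by omega), ?_⟩
  ext q
  simp only [evalOn_apply, hu q q.2, Pi.basisFun_apply, Pi.single_apply, Subtype.ext_iff]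

theorem finrank_restrictTotalDegree_inf_ker_evalOn [Finite σ] {S : Finset (σ → K)} {m : ℕ}
    (hS : #S ≤ m + 1) :
    finrank K ↥(restrictTotalDegree σ K m ⊓ LinearMap.ker (evalOn S)) + #S =
      finrank K (restrictTotalDegree σ K m) := by
  have h := Submodule.finrank_map_add_finrank_inf_ker (evalOn S) (restrictTotalDegree σ K m)
  rwa [map_evalOn_restrictTotalDegree hS, finrank_top, Module.finrank_fintype_fun_eq_card,
    Fintype.card_coe, add_comm] at h

end Interpolation

section Syzygies

variable {R σ : Type*} [CommRing R] {F G : MvPolynomial σ R}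

theorem map_coprod_mulRight_le_restrictTotalDegree {k l m : ℕ} (hk : k + F.totalDegree ≤ m)
    (hl : l + G.totalDegree ≤ m) :
    ((restrictTotalDegree σ R k).prod (restrictTotalDegree σ R l)).map
      ((LinearMap.mulRight R F).coprod (LinearMap.mulRight R G)) ≤ restrictTotalDegree σ R m := by
  rintro _ ⟨⟨a, b⟩, ⟨ha, hb⟩, rfl⟩
  rw [SetLike.mem_coe, mem_restrictTotalDegree] at ha hb
  rw [mem_restrictTotalDegree, LinearMap.coprod_apply, LinearMap.mulRight_apply,
    LinearMap.mulRight_apply]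
  refine (totalDegree_add _ _).trans (max_le ?_ ?_)
  · exact (totalDegree_mul _ _).trans (by omega)
  · exact (totalDegree_mul _ _).trans (by omega)

theorem prod_restrictTotalDegree_inf_ker_coprod_le_map [IsDomain R] (hF : Prime F)
    (hFG : ¬F ∣ G) (k n : ℕ) :
    (restrictTotalDegree σ R k).prod (restrictTotalDegree σ R (F.totalDegree + n)) ⊓
        LinearMap.ker ((LinearMap.mulRight R F).coprod (LinearMap.mulRight R G)) ≤
      (restrictTotalDegree σ R n).map
        ((-LinearMap.mulRight R G).prod (LinearMap.mulRight R F)) := by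
  rintro ⟨a, b⟩ ⟨⟨-, hb⟩, hab⟩
  have hab : a * F + b * G = 0 := hab
  obtain ⟨c, rfl⟩ : F ∣ b := (hF.dvd_or_dvd ⟨-a, by linear_combination hab⟩).resolve_right hFG
  have ha : a = -(c * G) := mul_left_cancel₀ hF.ne_zero (by linear_combination hab)
  refine ⟨c, (mem_restrictTotalDegree _ _ _).2 ?_, by simp [ha, mul_comm]⟩
  rcases eq_or_ne c 0 with rfl | hc
  · simp
  · have hb := (mem_restrictTotalDegree _ _ _).1 hb
    rw [totalDegree_mul_of_isDomain hF.ne_zero hc] at hb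
    omega

end Syzygies

section Bezout

variable {K : Type*} [Field K]

theorem range_coprod_mulRight_le_ker_evalOn {σ : Type*} {F G : MvPolynomial σ K}
    {S : Finset (σ → K)} (hS : ∀ p ∈ S, eval p F = 0 ∧ eval p G = 0) :
    LinearMap.range ((LinearMap.mulRight K F).coprod (LinearMap.mulRight K G)) ≤
      LinearMap.ker (evalOn S) := by
  rintro _ ⟨⟨a, b⟩, rfl⟩
  ext q
  simp [(hS q q.2).1, (hS q q.2).2]

theorem card_le_totalDegree_mul_of_eval_eq_zero {F G : MvPolynomial (Fin 2) K} (hF : Prime F)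
    (hFG : ¬F ∣ G) {S : Finset (Fin 2 → K)} (hS : ∀ p ∈ S, eval p F = 0 ∧ eval p G = 0) :
    #S ≤ F.totalDegree * G.totalDegree := by
  set d := F.totalDegree
  set e := G.totalDegree
  set n := #S
  let V := restrictTotalDegree (Fin 2) K
  let φ := (LinearMap.mulRight K F).coprod (LinearMap.mulRight K G)
  let W := (V (e + n)).prod (V (d + n))
  have hker : finrank K ↥(W ⊓ LinearMap.ker φ) ≤ finrank K (V n) :=
    (Submodule.finrank_mono (prod_restrictTotalDegree_inf_ker_coprod_le_map hF hFG _ _)).trans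
      (Submodule.finrank_map_le _ _)
  have himage : finrank K (W.map φ) + n ≤ finrank K (V (d + e + n)) := by
    rw [← finrank_restrictTotalDegree_inf_ker_evalOn (S := S) (by omega)]
    gcongr
    exact Submodule.finrank_mono (le_inf (map_coprod_mulRight_le_restrictTotalDegree
      (by omega) (by omega)) (LinearMap.map_le_range.trans
        (range_coprod_mulRight_le_ker_evalOn hS)))
  have hsum := Submodule.finrank_map_add_finrank_inf_ker φ W
  rw [Submodule.finrank_prod_eq] at hsum
  have h₁ := two_mul_finrank_restrictTotalDegree_fin_two (K := K) n
  have h₂ := two_mul_finrank_restrictTotalDegree_fin_two (K := K) (e + n)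
  have h₃ := two_mul_finrank_restrictTotalDegree_fin_two (K := K) (d + n)
  have h₄ := two_mul_finrank_restrictTotalDegree_fin_two (K := K) (d + e + n)
  -- the quadratic terms of the four dimensions cancel up to `d * e`
  linarith

theorem encard_setOf_eval_eq_zero_le {F G : MvPolynomial (Fin 2) K} (hF : Prime F)
    (hFG : ¬F ∣ G) :
    {p : Fin 2 → K | eval p F = 0 ∧ eval p G = 0}.encard ≤ F.totalDegree * G.totalDegree := by
  by_contra! h
  obtain ⟨t, ht, htcard⟩ := Set.exists_subset_encard_eq (Order.add_one_le_of_lt h)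
  obtain ⟨T, rfl⟩ := (Set.finite_of_encard_eq_coe htcard).exists_finset_coe
  have hT := card_le_totalDegree_mul_of_eval_eq_zero hF hFG fun p hp => ht hp
  rw [Set.encard_coe_eq_coe_finsetCard] at htcard
  norm_cast at htcard
  omega

end Bezout

end MvPolynomial

theorem irreducible_dvd_of_many_common_zeros_general {K : Type*} [Field K]
    (F G : MvPolynomial (Fin 2) K) (d : ℕ)
    (hF : Irreducible F) (hdF : F.totalDegree = d)
    (hdG : G.totalDegree ≤ d)
    (hcount : ((d : ℕ∞) ^ 2) <
      {xy : K × K | MvPolynomial.eval ![xy.1, xy.2] F = 0 ∧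
        MvPolynomial.eval ![xy.1, xy.2] G = 0}.encard) :
    F ∣ G := by
  by_contra hFG
  have hbound := encard_setOf_eval_eq_zero_le hF.prime hFG
  rw [← Set.encard_preimage_of_bijective (finTwoArrowEquiv K).symm.bijective] at hbound
  have hdeg : (F.totalDegree * G.totalDegree : ℕ∞) ≤ d ^ 2 := by
    rw [hdF, sq]
    gcongr
  exact (hcount.trans_le hbound).not_ge hdeg

/-- **Lemma (a Bézout-type consequence).**  Let `K` be an algebraically closed field,
`F ∈ K[X,Y]` irreducible of total degree `d`, and `G ∈ K[X,Y]` nonzero of total degree at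
most `d`.  If `F` and `G` have more than `d²` common zeros in `K²`, then `F ∣ G`. -/
theorem irreducible_dvd_of_many_common_zeros {K : Type*} [Field K] [IsAlgClosed K]
    (F G : MvPolynomial (Fin 2) K) (d : ℕ)
    (hF : Irreducible F) (hdF : F.totalDegree = d)
    (hG : G ≠ 0) (hdG : G.totalDegree ≤ d)
    (hcount : ((d : ℕ∞) ^ 2) <
      {xy : K × K | MvPolynomial.eval ![xy.1, xy.2] F = 0 ∧
        MvPolynomial.eval ![xy.1, xy.2] G = 0}.encard) :
    F ∣ G :=
  irreducible_dvd_of_many_common_zeros_general F G d hF hdF hdG hcount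
end
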